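/- arXiv:2003.07086 — 5 statements merged into one kernel-verified Lean document; each statement's English description precedes it below -/
import Mathlib

section
/- For every fixed α ∈ (0,1], there exists a dimension d such that the Werner state ρ with parameter α = 1−2θ satisfies I(A:B)_ρ > 2·I(A:B)_{ρ^Γ}; indeed lim_{d→∞} I(A:B)_ρ = 1 − h((1−α)/2) > 0 while lim_{d→∞} I(A:B)_{ρ^Γ} = 0. -/
open Matrix BigOperators Filter

noncomputable section

def swapM (d : ℕ) : Matrix (Fin d × Fin d) (Fin d × Fin d) ℂ :=
  fun p q => if p.1 = q.2 ∧ p.2 = q.1 then 1 else 0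

def phiProj (d : ℕ) : Matrix (Fin d × Fin d) (Fin d × Fin d) ℂ :=
  fun p q => if p.1 = p.2 ∧ q.1 = q.2 then (d : ℂ)⁻¹ else 0

def ptB {d : ℕ} (ρ : Matrix (Fin d × Fin d) (Fin d × Fin d) ℂ) :
    Matrix (Fin d × Fin d) (Fin d × Fin d) ℂ :=
  fun p q => ρ (p.1, q.2) (q.1, p.2)

def rhoS (d : ℕ) : Matrix (Fin d × Fin d) (Fin d × Fin d) ℂ :=
  ((d : ℂ)^2 + (d : ℂ))⁻¹ • (1 + swapM d)

def rhoA (d : ℕ) : Matrix (Fin d × Fin d) (Fin d × Fin d) ℂ :=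
  ((d : ℂ)^2 - (d : ℂ))⁻¹ • (1 - swapM d)

def wernerT (d : ℕ) (θ : ℝ) : Matrix (Fin d × Fin d) (Fin d × Fin d) ℂ :=
  ((1 - θ : ℝ) : ℂ) • rhoS d + ((θ : ℝ) : ℂ) • rhoA d

def wernerA (d : ℕ) (α : ℝ) : Matrix (Fin d × Fin d) (Fin d × Fin d) ℂ :=
  (((1 + α) / 2 : ℝ) : ℂ) • rhoS d + (((1 - α) / 2 : ℝ) : ℂ) • rhoA d

def trB {dA dB : ℕ} (ρ : Matrix (Fin dA × Fin dB) (Fin dA × Fin dB) ℂ) :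
    Matrix (Fin dA) (Fin dA) ℂ :=
  fun i k => ∑ j, ρ (i, j) (k, j)

def trA {dA dB : ℕ} (ρ : Matrix (Fin dA × Fin dB) (Fin dA × Fin dB) ℂ) :
    Matrix (Fin dB) (Fin dB) ℂ :=
  fun j l => ∑ i, ρ (i, j) (i, l)

def nlog2 (x : ℝ) : ℝ := -(x * Real.logb 2 x)

def binEnt (p : ℝ) : ℝ := nlog2 p + nlog2 (1 - p)

def vN {n : Type*} [Fintype n] [DecidableEq n] (ρ : Matrix n n ℂ) : ℝ :=
  if h : ρ.IsHermitian then ∑ i, nlog2 (h.eigenvalues i) else 0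

def mutInfo {dA dB : ℕ} (ρ : Matrix (Fin dA × Fin dB) (Fin dA × Fin dB) ℂ) : ℝ :=
  vN (trB ρ) + vN (trA ρ) - vN ρ

def traceNorm {n : Type*} [Fintype n] [DecidableEq n] (X : Matrix n n ℂ) : ℝ :=
  if h : X.IsHermitian then ∑ i, |h.eigenvalues i| else 0

def mlog {n : Type*} [Fintype n] [DecidableEq n] (A : Matrix n n ℂ) : Matrix n n ℂ :=
  if h : A.IsHermitian then
    (h.eigenvectorUnitary : Matrix n n ℂ) *
      Matrix.diagonal (fun i => ((Real.logb 2 (h.eigenvalues i) : ℝ) : ℂ)) *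
      (star (h.eigenvectorUnitary : Matrix n n ℂ))
  else 0

def qRelEnt {n : Type*} [Fintype n] [DecidableEq n] (ρ σ : Matrix n n ℂ) : ℝ :=
  ((ρ * mlog ρ - ρ * mlog σ).trace).re

def tpow {m : Type*} [Fintype m] (ρ : Matrix m m ℂ) (n : ℕ) :
    Matrix (Fin n → m) (Fin n → m) ℂ :=
  fun f g => ∏ i, ρ (f i) (g i)

def klDiv2 {ι : Type*} [Fintype ι] (p q : ι → ℝ) : ℝ :=
  ∑ i, p i * Real.logb 2 (p i / q i)

def phiVec (d : ℕ) : Fin d × Fin d → ℂ :=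
  fun p => if p.1 = p.2 then (Complex.ofReal (Real.sqrt d))⁻¹ else 0


/-!
Write `F` for the swap and `Φ` for the projection onto the maximally entangled vector. The Werner
state is `ρ = x • 1 + y • F` with `F² = 1`, and its partial transpose is `x • 1 + y d • Φ` with
`Φ² = Φ`; so each is annihilated by a quadratic, has two eigenvalues, and the trace fixes their
multiplicities. Both states have maximally mixed marginals, so `I = 2 log d - S`, which gives closed
forms. As `d → ∞`, `I(ρ) → 1 - h((1 - α)/2)`, positive as `α ≠ 0`, while `I(ρ^Γ) → 0`.
-/
namespace Matrix.IsHermitian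

variable {N : Type*} [Fintype N] [DecidableEq N] {A : Matrix N N ℂ}

theorem eigenvalues_eq_or_eq (hA : A.IsHermitian) {a b : ℝ}
    (hq : (A - (a : ℂ) • 1) * (A - (b : ℂ) • 1) = 0) (i : N) :
    hA.eigenvalues i = a ∨ hA.eigenvalues i = b := by
  set v := ⇑(hA.eigenvectorBasis i)
  have hv : v ≠ 0 := fun h =>
    hA.eigenvectorBasis.orthonormal.ne_zero i (by ext j; exact congrFun h j)
  have hAv : A *ᵥ v = (hA.eigenvalues i : ℂ) • v := by
    rw [hA.mulVec_eigenvectorBasis]; ext j; simp [v, Complex.real_smul]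
  have hsub : ∀ c : ℂ, (A - c • 1) *ᵥ v = ((hA.eigenvalues i : ℂ) - c) • v := fun c => by
    rw [sub_mulVec, hAv, smul_mulVec, one_mulVec, sub_smul]
  have h0 : (((hA.eigenvalues i : ℂ) - a) * ((hA.eigenvalues i : ℂ) - b)) • v = 0 := by
    rw [mul_comm, ← smul_smul, ← hsub, ← mulVec_smul, ← hsub, mulVec_mulVec, hq, zero_mulVec]
  have := (smul_eq_zero.mp h0).resolve_right hv
  simpa [sub_eq_zero] using this

theorem sum_eigenvalues_of_two_valued (hA : A.IsHermitian) {a b m : ℝ}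
    (hq : (A - (a : ℂ) • 1) * (A - (b : ℂ) • 1) = 0)
    (htr : A.trace = ((m * a + (Fintype.card N - m) * b : ℝ) : ℂ)) (f : ℝ → ℝ) :
    ∑ i, f (hA.eigenvalues i) = m * f a + (Fintype.card N - m) * f b := by
  rcases eq_or_ne a b with rfl | hab
  · have : ∀ i, hA.eigenvalues i = a := fun i => (hA.eigenvalues_eq_or_eq hq i).elim id id
    simp only [this, Finset.sum_const, Finset.card_univ, nsmul_eq_mul]
    ring
  -- on `{a, b}` every function agrees with the affine interpolation of its values at `a` and `b`
  have hlin : ∀ i, f (hA.eigenvalues i)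
      = f b + (hA.eigenvalues i - b) * ((f a - f b) / (a - b)) := fun i => by
    rcases hA.eigenvalues_eq_or_eq hq i with h | h <;> rw [h]
    · field_simp [sub_ne_zero.mpr hab]; ring
    · ring
  have hsum : ∑ i, hA.eigenvalues i = m * a + (Fintype.card N - m) * b := by
    have h := hA.trace_eq_sum_eigenvalues
    rw [htr] at h
    exact Complex.ofReal_injective (by rw [Complex.ofReal_sum]; exact h.symm)
  simp only [hlin, Finset.sum_add_distrib, ← Finset.sum_mul, Finset.sum_sub_distrib, hsum,
    Finset.sum_const, Finset.card_univ, nsmul_eq_mul]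
  field_simp [sub_ne_zero.mpr hab]
  ring

end Matrix.IsHermitian

theorem isHermitian_smul_one_add_smul {N : Type*} [DecidableEq N] {M : Matrix N N ℂ}
    (hM : M.IsHermitian) (x y : ℝ) : ((x : ℂ) • 1 + (y : ℂ) • M).IsHermitian :=
  (isHermitian_one.smul (Complex.conj_ofReal x)).add (hM.smul (Complex.conj_ofReal y))

section VonNeumann

variable {N : Type*} [Fintype N] [DecidableEq N]

theorem vN_of_two_valued {A : Matrix N N ℂ} (hA : A.IsHermitian) {a b m : ℝ}
    (hq : (A - (a : ℂ) • 1) * (A - (b : ℂ) • 1) = 0)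
    (htr : A.trace = ((m * a + (Fintype.card N - m) * b : ℝ) : ℂ)) :
    vN A = m * nlog2 a + (Fintype.card N - m) * nlog2 b := by
  rw [vN, dif_pos hA]
  exact hA.sum_eigenvalues_of_two_valued hq htr nlog2

theorem vN_smul_one (r : ℝ) : vN ((r : ℂ) • (1 : Matrix N N ℂ)) = Fintype.card N * nlog2 r := by
  have hA : ((r : ℂ) • (1 : Matrix N N ℂ)).IsHermitian := by
    simpa using isHermitian_smul_one_add_smul (isHermitian_one (n := N)) r 0
  have := vN_of_two_valued hA (a := r) (b := r) (m := 0) (by simp) (by simp [mul_comm])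
  simpa using this

theorem mul_sub_smul_one_eq_zero_of_mul_self_eq_one {M : Matrix N N ℂ} (hM : M * M = 1)
    (x y : ℂ) : (x • 1 + y • M - (x + y) • 1) * (x • 1 + y • M - (x - y) • 1) = 0 := by
  have : (x • 1 + y • M - (x + y) • 1) * (x • 1 + y • M - (x - y) • 1)
      = (y * y) • (M * M - 1) := by
    simp only [sub_mul, mul_sub, add_mul, mul_add, smul_mul_smul, mul_one, one_mul, smul_sub]
    module
  rw [this, hM, sub_self, smul_zero]

theorem mul_sub_smul_one_eq_zero_of_mul_self_eq_self {P : Matrix N N ℂ} (hP : P * P = P)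
    (x y : ℂ) : (x • 1 + y • P - (x + y) • 1) * (x • 1 + y • P - x • 1) = 0 := by
  have : (x • 1 + y • P - (x + y) • 1) * (x • 1 + y • P - x • 1)
      = (y * y) • (P * P - P) := by
    simp only [sub_mul, mul_sub, add_mul, mul_add, smul_mul_smul, mul_one, one_mul, smul_sub]
    module
  rw [this, hP, sub_self, smul_zero]

end VonNeumann

section Operators

variable {d : ℕ}

theorem swapM_isHermitian : (swapM d).IsHermitian := by
  ext p q
  simp only [conjTranspose_apply, swapM]
  split_ifs <;> simp_all [eq_comm]

theorem swapM_mul_self : swapM d * swapM d = 1 := by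
  ext p q
  rw [mul_apply, Fintype.sum_eq_single p.swap]
  · simp [swapM, one_apply, Prod.ext_iff, and_comm]
  · intro j hj
    have : ¬(p.1 = j.2 ∧ p.2 = j.1) := fun h => hj (Prod.ext h.2.symm h.1.symm)
    simp [swapM, this]

theorem phiProj_isHermitian : (phiProj d).IsHermitian := by
  ext p q
  simp only [conjTranspose_apply, phiProj]
  split_ifs <;> simp_all

theorem phiProj_mul_self (hd : d ≠ 0) : phiProj d * phiProj d = phiProj d := by
  ext p q
  by_cases hp : p.1 = p.2 <;> by_cases hq : q.1 = q.2 <;>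
    simp [mul_apply, phiProj, Fintype.sum_prod_type, hp, hq]
  field_simp

theorem ptB_smul_one_add_smul_swapM (hd : d ≠ 0) (x y : ℂ) :
    ptB (x • 1 + y • swapM d) = x • 1 + (y * d) • phiProj d := by
  ext p q
  simp [ptB, swapM, phiProj, one_apply, Prod.ext_iff, eq_comm, hd]

theorem trB_smul_one_add_smul_swapM (x y : ℂ) :
    trB (x • 1 + y • swapM d) = (x * d + y) • 1 := by
  ext i k
  by_cases h : i = k
  · subst h
    simp [trB, swapM, one_apply, Finset.sum_add_distrib, mul_comm, and_iff_left_of_imp Eq.symm]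
  · simp only [trB, Matrix.add_apply, Matrix.smul_apply, one_apply, Prod.mk.injEq, h, and_true,
      ↓reduceIte, smul_eq_mul, mul_zero, swapM, mul_ite, mul_one, zero_add]
    exact Finset.sum_eq_zero fun j _ => if_neg fun hj => h (hj.1.trans hj.2)

theorem trA_smul_one_add_smul_swapM (x y : ℂ) :
    trA (x • 1 + y • swapM d) = (x * d + y) • 1 := by
  ext i k
  by_cases h : i = k
  · subst h
    simp [trA, swapM, one_apply, Finset.sum_add_distrib, mul_comm, and_iff_left_of_imp Eq.symm]
  · simp only [trA, Matrix.add_apply, Matrix.smul_apply, one_apply, Prod.mk.injEq, h, and_false,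
      ↓reduceIte, smul_eq_mul, mul_zero, swapM, mul_ite, mul_one, zero_add]
    exact Finset.sum_eq_zero fun j _ => if_neg fun hj => h (hj.2.trans hj.1)

theorem trace_trB {dA dB : ℕ} (ρ : Matrix (Fin dA × Fin dB) (Fin dA × Fin dB) ℂ) :
    (trB ρ).trace = ρ.trace := by
  simp [trace, trB, Fintype.sum_prod_type]

theorem trB_ptB (ρ : Matrix (Fin d × Fin d) (Fin d × Fin d) ℂ) : trB (ptB ρ) = trB ρ := rfl

theorem trA_ptB (ρ : Matrix (Fin d × Fin d) (Fin d × Fin d) ℂ) : trA (ptB ρ) = (trA ρ)ᵀ := rfl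

end Operators

section Entropy

open Real

theorem binEnt_one_sub (p : ℝ) : binEnt (1 - p) = binEnt p := by
  rw [binEnt, binEnt, sub_sub_cancel, add_comm]

theorem mul_nlog2_div {k : ℝ} (hk : k ≠ 0) (c : ℝ) :
    k * nlog2 (c / k) = c * logb 2 k + nlog2 c := by
  rcases eq_or_ne c 0 with rfl | hc
  · simp [nlog2]
  rw [nlog2, nlog2, logb_div hc hk]
  field_simp
  ring

theorem nlog2_inv_natCast_mul (d : ℕ) : d * nlog2 (d : ℝ)⁻¹ = logb 2 d := by
  rcases eq_or_ne d 0 with rfl | hd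
  · simp
  simpa [nlog2] using mul_nlog2_div (k := d) (by exact_mod_cast hd) 1

theorem mutInfo_eq_of_two_valued {d : ℕ} (hd : d ≠ 0)
    {ρ : Matrix (Fin d × Fin d) (Fin d × Fin d) ℂ} (hρ : ρ.IsHermitian)
    (hB : trB ρ = (((d : ℝ)⁻¹ : ℝ) : ℂ) • 1) (hA : trA ρ = (((d : ℝ)⁻¹ : ℝ) : ℂ) • 1)
    {c m : ℝ} (hm : m ≠ 0) (hmd : m ≠ d ^ 2)
    (hq : (ρ - ((c / m : ℝ) : ℂ) • 1) * (ρ - (((1 - c) / (d ^ 2 - m) : ℝ) : ℂ) • 1) = 0) :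
    mutInfo ρ = c * logb 2 (d ^ 2 / m) + (1 - c) * logb 2 (d ^ 2 / (d ^ 2 - m)) - binEnt c := by
  have hcard : (Fintype.card (Fin d × Fin d) : ℝ) = d ^ 2 := by simp [sq]
  have hm' : (d : ℝ) ^ 2 - m ≠ 0 := sub_ne_zero.mpr (Ne.symm hmd)
  have hd' : (d : ℝ) ^ 2 ≠ 0 := by positivity
  have htr : ρ.trace = 1 := by
    rw [← trace_trB, hB, trace_smul, trace_one, Fintype.card_fin]
    simp [hd]
  have hvN := vN_of_two_valued hρ hq (m := m) (by
    rw [htr, hcard]; field_simp; simp)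
  rw [mutInfo, hB, hA, vN_smul_one, hvN, hcard, Fintype.card_fin,
    nlog2_inv_natCast_mul, mul_nlog2_div hm, mul_nlog2_div hm', binEnt,
    logb_div hd' hm, logb_div hd' hm', logb_pow]
  ring

end Entropy

section Werner

open Real

variable {d : ℕ}

theorem wernerA_eq_smul_one_add_smul_swapM (hd : 2 ≤ d) (α : ℝ) :
    wernerA d α = (((d - α) / (d * (d ^ 2 - 1)) : ℝ) : ℂ) • 1
      + (((α * d - 1) / (d * (d ^ 2 - 1)) : ℝ) : ℂ) • swapM d := by
  have h0 : (d : ℂ) ≠ 0 := by exact_mod_cast (by omega : d ≠ 0)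
  have hm : (d : ℂ) - 1 ≠ 0 := sub_ne_zero.mpr (by exact_mod_cast (by omega : d ≠ 1))
  have hp : (d : ℂ) + 1 ≠ 0 := by exact_mod_cast d.succ_ne_zero
  have hdp : (d : ℂ) ^ 2 + d ≠ 0 := fun h => mul_ne_zero h0 hp (by linear_combination h)
  have hdm : (d : ℂ) ^ 2 - d ≠ 0 := fun h => mul_ne_zero h0 hm (by linear_combination h)
  have h1 : (d : ℂ) ^ 2 - 1 ≠ 0 := fun h => mul_ne_zero hm hp (by linear_combination h)
  simp only [wernerA, rhoS, rhoA, smul_add, smul_sub, smul_smul]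
  match_scalars <;> field_simp <;> ring

theorem wernerA_coeff_marginal (hd : 2 ≤ d) (α : ℝ) :
    (d - α) / (d * (d ^ 2 - 1)) * d + (α * d - 1) / (d * (d ^ 2 - 1)) = (d : ℝ)⁻¹ := by
  have h2 : (2 : ℝ) ≤ d := by exact_mod_cast hd
  have h1 : (d : ℝ) ^ 2 - 1 ≠ 0 := by nlinarith
  field_simp
  ring

theorem isHermitian_wernerA (hd : 2 ≤ d) (α : ℝ) : (wernerA d α).IsHermitian := by
  rw [wernerA_eq_smul_one_add_smul_swapM hd]
  exact isHermitian_smul_one_add_smul swapM_isHermitian _ _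

theorem trB_wernerA (hd : 2 ≤ d) (α : ℝ) : trB (wernerA d α) = (((d : ℝ)⁻¹ : ℝ) : ℂ) • 1 := by
  rw [wernerA_eq_smul_one_add_smul_swapM hd, trB_smul_one_add_smul_swapM,
    ← wernerA_coeff_marginal hd α]
  push_cast
  rfl

theorem trA_wernerA (hd : 2 ≤ d) (α : ℝ) : trA (wernerA d α) = (((d : ℝ)⁻¹ : ℝ) : ℂ) • 1 := by
  rw [wernerA_eq_smul_one_add_smul_swapM hd, trA_smul_one_add_smul_swapM,
    ← wernerA_coeff_marginal hd α]
  push_cast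
  rfl

theorem ptB_wernerA_eq (hd : 2 ≤ d) (α : ℝ) :
    ptB (wernerA d α) = (((d - α) / (d * (d ^ 2 - 1)) : ℝ) : ℂ) • 1
      + (((α * d - 1) / (d * (d ^ 2 - 1)) * d : ℝ) : ℂ) • phiProj d := by
  rw [wernerA_eq_smul_one_add_smul_swapM hd, ptB_smul_one_add_smul_swapM (by omega)]
  push_cast
  rfl

theorem mutInfo_wernerA (hd : 2 ≤ d) (α : ℝ) :
    mutInfo (wernerA d α) = (1 + α) / 2 * logb 2 (2 * d / (d + 1))
      + (1 - α) / 2 * logb 2 (2 * d / (d - 1)) - binEnt ((1 - α) / 2) := by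
  have h2 : (2 : ℝ) ≤ d := by exact_mod_cast hd
  have h1 : (d : ℝ) ^ 2 - 1 ≠ 0 := by nlinarith
  have hd1 : (d : ℝ) - 1 ≠ 0 := by linarith
  -- weight `(1 + α) / 2` on the symmetric subspace, of dimension `d (d + 1) / 2`
  have hm : ((d : ℝ) ^ 2 + d) / 2 ≠ 0 := by positivity
  have hmd : ((d : ℝ) ^ 2 + d) / 2 ≠ d ^ 2 := by nlinarith
  have hsub : (d : ℝ) ^ 2 - (d ^ 2 + d) / 2 = d * (d - 1) / 2 := by ring
  have hplus : (1 + α) / 2 / ((d ^ 2 + d) / 2)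
      = (d - α) / (d * (d ^ 2 - 1)) + (α * d - 1) / (d * (d ^ 2 - 1)) := by
    field_simp; ring
  have hminus : (1 - (1 + α) / 2) / (d ^ 2 - (d ^ 2 + d) / 2)
      = (d - α) / (d * (d ^ 2 - 1)) - (α * d - 1) / (d * (d ^ 2 - 1)) := by
    rw [hsub]; field_simp; ring
  rw [mutInfo_eq_of_two_valued (by omega) (isHermitian_wernerA hd α) (trB_wernerA hd α)
    (trA_wernerA hd α) hm hmd (by
      rw [hplus, hminus, wernerA_eq_smul_one_add_smul_swapM hd]
      push_cast
      exact mul_sub_smul_one_eq_zero_of_mul_self_eq_one swapM_mul_self _ _)]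
  have e1 : (d : ℝ) ^ 2 / ((d ^ 2 + d) / 2) = 2 * d / (d + 1) := by field_simp
  have e2 : (d : ℝ) ^ 2 / (d ^ 2 - (d ^ 2 + d) / 2) = 2 * d / (d - 1) := by
    rw [hsub]; field_simp
  have e3 : binEnt ((1 + α) / 2) = binEnt ((1 - α) / 2) := by rw [← binEnt_one_sub]; ring_nf
  rw [e1, e2, e3]
  ring

theorem mutInfo_ptB_wernerA (hd : 2 ≤ d) (α : ℝ) :
    mutInfo (ptB (wernerA d α)) = α / d * logb 2 (d ^ 2)
      + (1 - α / d) * logb 2 (d ^ 2 / (d ^ 2 - 1)) - binEnt (α / d) := by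
  have h2 : (2 : ℝ) ≤ d := by exact_mod_cast hd
  have h1 : (d : ℝ) ^ 2 - 1 ≠ 0 := by nlinarith
  have hmd : (1 : ℝ) ≠ d ^ 2 := by nlinarith
  have hρ : (ptB (wernerA d α)).IsHermitian := by
    rw [ptB_wernerA_eq hd]
    exact isHermitian_smul_one_add_smul phiProj_isHermitian _ _
  have hB : trB (ptB (wernerA d α)) = (((d : ℝ)⁻¹ : ℝ) : ℂ) • 1 := by
    rw [trB_ptB, trB_wernerA hd]
  have hA : trA (ptB (wernerA d α)) = (((d : ℝ)⁻¹ : ℝ) : ℂ) • 1 := by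
    rw [trA_ptB, trA_wernerA hd, transpose_smul, transpose_one]
  -- weight `α / d` on the line spanned by the maximally entangled vector
  have hΦ : α / d / 1
      = (d - α) / (d * (d ^ 2 - 1)) + (α * d - 1) / (d * (d ^ 2 - 1)) * d := by
    field_simp; ring
  have hΦperp : (1 - α / d) / (d ^ 2 - 1) = (d - α) / (d * (d ^ 2 - 1)) := by
    field_simp
  rw [mutInfo_eq_of_two_valued (by omega) hρ hB hA one_ne_zero hmd (by
      rw [hΦ, hΦperp, ptB_wernerA_eq hd]
      push_cast
      exact mul_sub_smul_one_eq_zero_of_mul_self_eq_self (phiProj_mul_self (by omega)) _ _),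
    div_one]

end Werner

section Limits

open Real

theorem binEnt_eq_binEntropy_div_log_two (p : ℝ) : binEnt p = binEntropy p / log 2 := by
  rw [binEnt, nlog2, nlog2, binEntropy_eq_negMulLog_add_negMulLog_one_sub, negMulLog,
    negMulLog, logb, logb]
  ring

theorem continuous_binEnt : Continuous binEnt := by
  simp_rw [funext binEnt_eq_binEntropy_div_log_two]
  fun_prop

theorem binEnt_lt_one_iff {p : ℝ} : binEnt p < 1 ↔ p ≠ 2⁻¹ := by
  rw [binEnt_eq_binEntropy_div_log_two, div_lt_one (log_pos one_lt_two), binEntropy_lt_log_two]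

theorem tendsto_logb_two_mul_div_add (x : ℝ) :
    Tendsto (fun d : ℕ => logb 2 (2 * d / (d + x))) atTop (nhds 1) := by
  have h := ((tendsto_natCast_div_add_atTop x).const_mul (2 : ℝ)).logb (b := 2) (by norm_num)
  simpa [mul_div_assoc] using h

theorem tendsto_logb_natCast_div : Tendsto (fun d : ℕ => logb 2 d / d) atTop (nhds 0) := by
  have h := ((tendsto_pow_log_div_mul_add_atTop 1 0 1 one_ne_zero).comp
    tendsto_natCast_atTop_atTop).div_const (log 2)
  simpa [logb, div_right_comm] using h

theorem tendsto_mutInfo_wernerA (α : ℝ) :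
    Tendsto (fun d : ℕ => mutInfo (wernerA d α)) atTop (nhds (1 - binEnt ((1 - α) / 2))) := by
  have hplus := tendsto_logb_two_mul_div_add 1
  have hminus : Tendsto (fun d : ℕ => logb 2 (2 * d / (d - 1))) atTop (nhds 1) := by
    simpa [sub_eq_add_neg] using tendsto_logb_two_mul_div_add (-1)
  have hlim : (1 + α) / 2 * 1 + (1 - α) / 2 * 1 - binEnt ((1 - α) / 2)
      = 1 - binEnt ((1 - α) / 2) := by ring
  rw [← hlim]
  refine Tendsto.congr' ?_ (((hplus.const_mul _).add (hminus.const_mul _)).sub_const _)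
  filter_upwards [eventually_ge_atTop 2] with d hd
  rw [mutInfo_wernerA hd]

theorem tendsto_mutInfo_ptB_wernerA (α : ℝ) :
    Tendsto (fun d : ℕ => mutInfo (ptB (wernerA d α))) atTop (nhds 0) := by
  have hαd : Tendsto (fun d : ℕ => α / d) atTop (nhds 0) := tendsto_const_div_atTop_nhds_zero_nat α
  have hentangled : Tendsto (fun d : ℕ => α / d * logb 2 (d ^ 2)) atTop (nhds 0) := by
    have h := tendsto_logb_natCast_div.const_mul (2 * α)
    rw [mul_zero] at h
    refine h.congr fun d => ?_
    rw [logb_pow]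
    ring
  have hratio : Tendsto (fun d : ℕ => logb 2 ((d : ℝ) ^ 2 / (d ^ 2 - 1))) atTop (nhds 0) := by
    have h := ((tendsto_natCast_div_add_atTop (-1 : ℝ)).comp (tendsto_pow_atTop two_ne_zero)).logb
      (b := 2) one_ne_zero
    simpa [sub_eq_add_neg] using h
  have hrest := ((tendsto_const_nhds (x := (1 : ℝ))).sub hαd).mul hratio
  have hbin : Tendsto (fun d : ℕ => binEnt (α / d)) atTop (nhds 0) :=
    (continuous_binEnt.tendsto' 0 0 (by simp [binEnt, nlog2])).comp hαd
  have h := (hentangled.add hrest).sub hbin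
  simp only [sub_zero, mul_zero, add_zero] at h
  refine h.congr' ?_
  filter_upwards [eventually_ge_atTop 2] with d hd
  rw [mutInfo_ptB_wernerA hd]

end Limits

theorem werner_gap_exists (α : ℝ) (hα : α ∈ Set.Ioc (0 : ℝ) 1) :
    (∃ d : ℕ, 2 ≤ d ∧ 2 * mutInfo (ptB (wernerA d α)) < mutInfo (wernerA d α)) ∧
    Filter.Tendsto (fun d : ℕ => mutInfo (wernerA d α)) Filter.atTop
      (nhds (1 - binEnt ((1 - α)/2))) ∧
    0 < 1 - binEnt ((1 - α)/2) ∧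
    Filter.Tendsto (fun d : ℕ => mutInfo (ptB (wernerA d α))) Filter.atTop (nhds 0) := by
  have hI := tendsto_mutInfo_wernerA α
  have hIΓ := tendsto_mutInfo_ptB_wernerA α
  have hpos : 0 < 1 - binEnt ((1 - α) / 2) := by
    rw [sub_pos, binEnt_lt_one_iff]
    intro h
    linarith [hα.1]
  have hgap : Tendsto (fun d : ℕ => mutInfo (wernerA d α) - 2 * mutInfo (ptB (wernerA d α)))
      atTop (nhds (1 - binEnt ((1 - α) / 2))) := by
    simpa using hI.sub (hIΓ.const_mul 2)
  obtain ⟨d, hd, hd2⟩ := ((hgap.eventually (lt_mem_nhds hpos)).and (eventually_ge_atTop 2)).exists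
  exact ⟨⟨d, hd2, by linarith⟩, hI, hpos, hIΓ⟩

end
end

section
/- For every real α with 0 ≤ α ≤ 1 and α ∉ (1/3, 1/2), the inequality 2η(α/2) − α ≤ η((1−α)/2) holds, where η(x) = −x log₂ x (with η(0)=0). -/
open Matrix BigOperators Filter

noncomputable section

/-!
Multiplied by `2 ln 2`, the inequality says `etaGap x ≥ 0`. Since
`etaGap' x = ln (x² (1 - x)) + 3 - ln 2` and the cubic `x² (1 - x)` increases up to `2/3` and
decreases after it, `etaGap` is convex on `[0, 2/3]` and concave on `[2/3, 1]`. A convex function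
vanishing at `1/3` and `1/2` is nonnegative outside `(1/3, 1/2)`; on `[2/3, 1]` concavity bounds
`etaGap` below by `min (etaGap (2/3)) (etaGap 1) = min ((5 ln 2 - 3 ln 3) / 3) 0 = 0`.
-/

open Real Set

def etaGap (x : ℝ) : ℝ := negMulLog (1 - x) - 2 * negMulLog x + (1 - x) * log 2

lemma etaGap_eq (x : ℝ) :
    etaGap x = 2 * log 2 * (nlog2 ((1 - x) / 2) - (2 * nlog2 (x / 2) - x)) := by
  have half (y : ℝ) : 2 * log 2 * nlog2 (y / 2) = negMulLog y + y * log 2 := by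
    have hlog2 : log 2 ≠ 0 := (log_pos one_lt_two).ne'
    have h := negMulLog_mul y 2⁻¹
    simp only [negMulLog, log_inv, ← div_eq_mul_inv] at h
    rw [nlog2, logb, negMulLog]
    field_simp
    linear_combination 2 * h
  rw [mul_sub, mul_sub, mul_left_comm, half, half, etaGap]
  ring

lemma continuous_etaGap : Continuous etaGap := by
  unfold etaGap; fun_prop

lemma hasDerivAt_etaGap {x : ℝ} (hx0 : 0 < x) (hx1 : x < 1) :
    HasDerivAt etaGap (log (x ^ 2 * (1 - x)) + 3 - log 2) x := by
  have h1 := (hasDerivAt_negMulLog (sub_pos.2 hx1).ne').comp x ((hasDerivAt_id x).const_sub 1)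
  have h2 := (hasDerivAt_negMulLog hx0.ne').const_mul 2
  have h3 := ((hasDerivAt_id x).const_sub 1).mul_const (log 2)
  refine ((h1.sub h2).add h3).congr_deriv ?_
  rw [log_mul (by positivity) (sub_pos.2 hx1).ne', log_pow]
  push_cast; ring

lemma etaGap_one_third : etaGap (1 / 3) = 0 := by
  simp only [etaGap, negMulLog]
  rw [show (1 : ℝ) - 1 / 3 = 2 / 3 by norm_num, log_div two_ne_zero three_ne_zero, one_div, log_inv]
  ring

lemma etaGap_one_half : etaGap (1 / 2) = 0 := by
  simp only [etaGap, negMulLog]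
  rw [show (1 : ℝ) - 1 / 2 = 1 / 2 by norm_num, one_div, log_inv]
  ring

lemma etaGap_one : etaGap 1 = 0 := by simp [etaGap]

lemma etaGap_two_thirds_nonneg : 0 ≤ etaGap (2 / 3) := by
  have h : 3 * log 3 ≤ 5 * log 2 := by
    have h := log_le_log (by norm_num) (show (3 : ℝ) ^ 3 ≤ 2 ^ 5 by norm_num)
    rwa [log_pow, log_pow, Nat.cast_ofNat, Nat.cast_ofNat] at h
  simp only [etaGap, negMulLog]
  rw [show (1 : ℝ) - 2 / 3 = 1 / 3 by norm_num, log_div two_ne_zero three_ne_zero, one_div, log_inv]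
  linarith

lemma monotoneOn_sq_mul_one_sub : MonotoneOn (fun x : ℝ => x ^ 2 * (1 - x)) (Icc 0 (2 / 3)) :=
  fun x ⟨hx0, _⟩ y ⟨_, hy⟩ hxy => by
    have : 0 ≤ (y - x) * (x + y - (x ^ 2 + x * y + y ^ 2)) :=
      mul_nonneg (sub_nonneg.2 hxy) (by nlinarith [mul_nonneg hx0 (sub_nonneg.2 hy)])
    simp only
    linarith

lemma antitoneOn_sq_mul_one_sub : AntitoneOn (fun x : ℝ => x ^ 2 * (1 - x)) (Ici (2 / 3)) :=
  fun x (hx : 2 / 3 ≤ x) y _ hxy => by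
    have : 0 ≤ (y - x) * (x ^ 2 + x * y + y ^ 2 - (x + y)) :=
      mul_nonneg (sub_nonneg.2 hxy) (by nlinarith)
    simp only
    linarith

lemma deriv_etaGap_le {x y : ℝ} (hx : x ∈ Ioo 0 1) (hy : y ∈ Ioo 0 1)
    (h : x ^ 2 * (1 - x) ≤ y ^ 2 * (1 - y)) : deriv etaGap x ≤ deriv etaGap y := by
  rw [(hasDerivAt_etaGap hx.1 hx.2).deriv, (hasDerivAt_etaGap hy.1 hy.2).deriv]
  have := log_le_log (mul_pos (pow_pos hx.1 2) (sub_pos.2 hx.2)) h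
  linarith

lemma differentiableOn_etaGap : DifferentiableOn ℝ etaGap (Ioo 0 1) :=
  fun _ hx => (hasDerivAt_etaGap hx.1 hx.2).differentiableAt.differentiableWithinAt

lemma convexOn_etaGap : ConvexOn ℝ (Icc 0 (2 / 3)) etaGap := by
  have hsub : Ioo (0 : ℝ) (2 / 3) ⊆ Ioo 0 1 := Ioo_subset_Ioo_right (by norm_num)
  refine MonotoneOn.convexOn_of_deriv (convex_Icc _ _) continuous_etaGap.continuousOn ?_ ?_ <;>
    rw [interior_Icc]
  · exact differentiableOn_etaGap.mono hsub
  · exact fun x hx y hy hxy => deriv_etaGap_le (hsub hx) (hsub hy)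
      (monotoneOn_sq_mul_one_sub (Ioo_subset_Icc_self hx) (Ioo_subset_Icc_self hy) hxy)

lemma concaveOn_etaGap : ConcaveOn ℝ (Icc (2 / 3) 1) etaGap := by
  have hsub : Ioo (2 / 3 : ℝ) 1 ⊆ Ioo 0 1 := Ioo_subset_Ioo_left (by norm_num)
  refine AntitoneOn.concaveOn_of_deriv (convex_Icc _ _) continuous_etaGap.continuousOn ?_ ?_ <;>
    rw [interior_Icc]
  · exact differentiableOn_etaGap.mono hsub
  · exact fun x hx y hy hxy => deriv_etaGap_le (hsub hy) (hsub hx)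
      (antitoneOn_sq_mul_one_sub hx.1.le hy.1.le hxy)

lemma etaGap_nonneg {x : ℝ} (h0 : 0 ≤ x) (h1 : x ≤ 1) (h : x ≤ 1 / 3 ∨ 1 / 2 ≤ x) :
    0 ≤ etaGap x := by
  rcases h with h | h
  · rw [← etaGap_one_third]
    exact convexOn_etaGap.le_left_of_right_le'' ⟨h0, by linarith⟩ ⟨by norm_num, by norm_num⟩ h
      (by norm_num) (etaGap_one_half.trans etaGap_one_third.symm).le
  rcases le_total x (2 / 3) with h23 | h23
  · rw [← etaGap_one_half]
    exact convexOn_etaGap.le_right_of_left_le'' ⟨by norm_num, by norm_num⟩ ⟨by linarith, h23⟩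
      (by norm_num) h (etaGap_one_third.trans etaGap_one_half.symm).le
  · have hseg : x ∈ segment ℝ (2 / 3) 1 := by rw [segment_eq_Icc (by norm_num)]; exact ⟨h23, h1⟩
    have := concaveOn_etaGap.ge_on_segment (by norm_num) (by norm_num) hseg
    rwa [etaGap_one, min_eq_right etaGap_two_thirds_nonneg] at this

theorem eta_pointwise_inequality (α : ℝ) (h0 : 0 ≤ α) (h1 : α ≤ 1)
    (h : α ≤ 1/3 ∨ 1/2 ≤ α) :
    2 * nlog2 (α/2) - α ≤ nlog2 ((1 - α)/2) := by
  have hgap := etaGap_eq α ▸ etaGap_nonneg h0 h1 h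
  have := nonneg_of_mul_nonneg_right hgap (by positivity)
  linarith

end
end

section
/- If α₁,α₂,α₃,α₄ ≥ 0 with α₁+α₂+α₃+α₄ = 2 and each αᵢ ∈ [0,1/3] ∪ [1/2,1], then 2·H({αᵢ/2}) − 2 ≤ H({(1−αᵢ)/2}), where H denotes the Shannon entropy of a probability vector (base 2). -/
open Matrix BigOperators Filter

noncomputable section

section AuxEntropy
open Real

lemma tangent_bound (a c : ℝ) (ha : 0 < a) (hc : 0 < c) :
    negMulLog a ≤ -a * Real.log c + c - a := by
  have h := Real.log_le_sub_one_of_pos (show (0:ℝ) < c / a by positivity)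
  rw [Real.log_div hc.ne' ha.ne'] at h
  have h2 := mul_le_mul_of_nonneg_left h ha.le
  rw [mul_sub] at h2
  have : a * (c / a - 1) = c - a := by field_simp
  rw [this] at h2
  simp only [negMulLog]
  nlinarith

lemma chord_bound (x y l m : ℝ) (hx : 0 ≤ x) (hy : 0 ≤ y) (hl : 0 ≤ l) (hm : 0 ≤ m)
    (hlm : l + m = 1) :
    l * negMulLog x + m * negMulLog y ≤ negMulLog (l * x + m * y) := by
  have := Real.concaveOn_negMulLog.2 (Set.mem_Ici.2 hx) (Set.mem_Ici.2 hy) hl hm hlm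
  simpa [smul_eq_mul] using this

lemma log3_bounds : 2 - Real.exp 1 / 3 ≤ Real.log 3 ∧ Real.log 3 ≤ 3 / Real.exp 1 := by
  have he : (0:ℝ) < Real.exp 1 := Real.exp_pos 1
  have h1 := Real.log_le_sub_one_of_pos (show (0:ℝ) < 3 / Real.exp 1 by positivity)
  have h2 := Real.log_le_sub_one_of_pos (show (0:ℝ) < Real.exp 1 / 3 by positivity)
  rw [Real.log_div (by norm_num) (Real.exp_ne_zero 1), Real.log_exp] at h1
  rw [Real.log_div (Real.exp_ne_zero 1) (by norm_num), Real.log_exp] at h2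
  constructor <;> nlinarith [Real.add_one_le_exp (1:ℝ)]

lemma log3_num : (1.0939:ℝ) ≤ Real.log 3 ∧ Real.log 3 ≤ 1.10364 := by
  obtain ⟨hl, hu⟩ := log3_bounds
  have h1 := Real.exp_one_gt_d9
  have h2 := Real.exp_one_lt_d9
  have he : (0:ℝ) < Real.exp 1 := Real.exp_pos 1
  have hmul : Real.log 3 * Real.exp 1 ≤ 3 := by
    have := mul_le_mul_of_nonneg_right hu he.le
    rwa [div_mul_cancel₀ _ he.ne'] at this
  have hpos : (0:ℝ) ≤ Real.log 3 := Real.log_nonneg (by norm_num)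
  constructor
  · nlinarith
  · nlinarith

set_option maxHeartbeats 1600000 in
lemma key_ineq (a : ℝ) (h0 : 0 ≤ a) (h1 : a ≤ 1) (h : a ≤ 1/3 ∨ 1/2 ≤ a) :
    negMulLog a ≤ negMulLog ((1 - a)/2) := by
  have l2lo : (0.6931471803:ℝ) < Real.log 2 := Real.log_two_gt_d9
  have l2hi : Real.log 2 < 0.6931471808 := Real.log_two_lt_d9
  obtain ⟨l3lo, l3hi⟩ := log3_num
  have log_third : Real.log (1/3 : ℝ) = - Real.log 3 := by
    rw [one_div, Real.log_inv]
  have log_half : Real.log (1/2 : ℝ) = - Real.log 2 := by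
    rw [one_div, Real.log_inv]
  have log_sixth : Real.log (1/6 : ℝ) = - (Real.log 2 + Real.log 3) := by
    rw [one_div, Real.log_inv, show (6:ℝ) = 2 * 3 by norm_num,
      Real.log_mul (by norm_num) (by norm_num)]
  have log_quarter : Real.log (1/4 : ℝ) = - (2 * Real.log 2) := by
    rw [one_div, Real.log_inv, show (4:ℝ) = 2^2 by norm_num, Real.log_pow]
    push_cast; ring
  have log_eighth : Real.log (1/8 : ℝ) = - (3 * Real.log 2) := by
    rw [one_div, Real.log_inv, show (8:ℝ) = 2^3 by norm_num, Real.log_pow]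
    push_cast; ring
  have log_two_thirds : Real.log (2/3 : ℝ) = Real.log 2 - Real.log 3 := by
    rw [Real.log_div (by norm_num) (by norm_num)]
  rcases h with hA | hB
  · -- Case A : a ≤ 1/3
    rcases eq_or_lt_of_le h0 with h0' | h0'
    · rw [← h0', negMulLog_zero]
      exact negMulLog_nonneg (by norm_num) (by norm_num)
    have htan := tangent_bound a (1/3) h0' (by norm_num)
    have hchord := chord_bound (1/3) (1/2) (3*a) (1 - 3*a)
      (by norm_num) (by norm_num) (by linarith) (by linarith) (by ring)
    rw [show (3*a) * (1/3 : ℝ) + (1 - 3*a) * (1/2) = (1-a)/2 by ring] at hchord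
    simp only [negMulLog] at hchord htan ⊢
    rw [log_third] at htan
    rw [log_third, log_half] at hchord
    have key : (0:ℝ) ≤ (1 - 3*a) * (Real.log 2 / 2 - 1/3) :=
      mul_nonneg (by linarith) (by linarith)
    nlinarith [key]
  · rcases le_or_gt a (2/3) with hB1 | hrest
    · -- Case B1 : 1/2 ≤ a ≤ 2/3
      have htan := tangent_bound a (1/2) (by linarith) (by norm_num)
      have hchord := chord_bound (1/6) (1/4) (6*a - 3) (4 - 6*a)
        (by norm_num) (by norm_num) (by linarith) (by linarith) (by ring)
      rw [show (6*a-3) * (1/6 : ℝ) + (4 - 6*a) * (1/4) = (1-a)/2 by ring] at hchord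
      simp only [negMulLog] at hchord htan ⊢
      rw [log_half] at htan
      rw [log_sixth, log_quarter] at hchord
      have hfac : (0:ℝ) ≤ Real.log 3 - 3 * Real.log 2 + 1 := by linarith
      have key : (0:ℝ) ≤ (a - 1/2) * (Real.log 3 - 3 * Real.log 2 + 1) :=
        mul_nonneg (by linarith) hfac
      nlinarith [key]
    rcases le_or_gt a (3/4) with hB2 | hB3
    · -- Case B2 : 2/3 ≤ a ≤ 3/4
      have htan := tangent_bound a (2/3) (by linarith) (by norm_num)
      have hchord := chord_bound (1/8) (1/6) (12*a - 8) (9 - 12*a)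
        (by norm_num) (by norm_num) (by linarith) (by linarith) (by ring)
      rw [show (12*a-8) * (1/8 : ℝ) + (9 - 12*a) * (1/6) = (1-a)/2 by ring] at hchord
      simp only [negMulLog] at hchord htan ⊢
      rw [log_two_thirds] at htan
      rw [log_eighth, log_sixth] at hchord
      have e1 : (0:ℝ) ≤ 5 * Real.log 2 - 3 * Real.log 3 := by linarith
      have e2 : (0:ℝ) ≤ (3/2) * Real.log 2 + 1/9 - Real.log 3 := by linarith
      have k1 : (0:ℝ) ≤ (a - 2/3) * ((3/2) * Real.log 2 + 1/9 - Real.log 3) :=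
        mul_nonneg (by linarith) e2
      have k2 : (0:ℝ) ≤ (3/4 - a) * (5 * Real.log 2 - 3 * Real.log 3) :=
        mul_nonneg (by linarith) e1
      nlinarith [k1, k2]
    · -- Case B3 : 3/4 ≤ a ≤ 1
      have htan := tangent_bound a 1 (by linarith) (by norm_num)
      rw [Real.log_one] at htan
      set v := (1-a)/2 with hv
      have hv0 : 0 ≤ v := by rw [hv]; linarith
      rcases eq_or_lt_of_le hv0 with hv0' | hv0'
      · have hz : negMulLog v = 0 := by rw [← hv0', negMulLog_zero]
        rw [hz]; linarith [hv0, htan]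
      have hv8 : v ≤ 1/8 := by rw [hv]; linarith
      have hlogv : Real.log v ≤ - (3 * Real.log 2) := by
        rw [← log_eighth]
        exact Real.log_le_log hv0' hv8
      have hmul : v * Real.log v ≤ v * (-(3 * Real.log 2)) :=
        mul_le_mul_of_nonneg_left hlogv hv0
      have hlb : v * 2 ≤ negMulLog v := by
        simp only [negMulLog]
        nlinarith [mul_nonneg hv0 (show (0:ℝ) ≤ 3 * Real.log 2 - 2 by linarith)]
      have h2v : v * 2 = 1 - a := by rw [hv]; ring
      linarith

lemma nlog2_eq (x : ℝ) : nlog2 x = negMulLog x / Real.log 2 := by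
  simp only [nlog2, Real.logb, negMulLog]
  ring

lemma pointwise_ineq (b : ℝ) (hb0 : 0 ≤ b) (hb1 : b ≤ 1) (hb : b ≤ 1/3 ∨ 1/2 ≤ b) :
    2 * nlog2 (b / 2) - b ≤ nlog2 ((1 - b)/2) := by
  have hlog2 : (0:ℝ) < Real.log 2 := Real.log_pos (by norm_num)
  have hL : 2 * nlog2 (b / 2) - b = negMulLog b / Real.log 2 := by
    rcases eq_or_lt_of_le hb0 with hb0' | hb0'
    · rw [← hb0']
      norm_num [nlog2]
    · rw [nlog2_eq]
      have hsplit : negMulLog (b/2) = (negMulLog b + b * Real.log 2) / 2 := by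
        simp only [negMulLog]
        rw [Real.log_div hb0'.ne' (by norm_num)]
        ring
      rw [hsplit]
      field_simp
      ring
  rw [hL, nlog2_eq]
  exact (div_le_div_iff_of_pos_right hlog2).mpr (key_ineq b hb0 hb1 hb)

end AuxEntropy

theorem bell_diagonal_entropy_inequality (a : Fin 4 → ℝ)
    (h0 : ∀ i, 0 ≤ a i) (h1 : ∀ i, a i ≤ 1) (hsum : ∑ i, a i = 2)
    (h : ∀ i, a i ≤ 1/3 ∨ 1/2 ≤ a i) :
    2 * (∑ i, nlog2 (a i / 2)) - 2 ≤ ∑ i, nlog2 ((1 - a i)/2) := by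
  have hpt : ∀ i, 2 * nlog2 (a i / 2) - a i ≤ nlog2 ((1 - a i)/2) :=
    fun i => pointwise_ineq (a i) (h0 i) (h1 i) (h i)
  have hsum' : ∑ i, (2 * nlog2 (a i / 2) - a i) = 2 * (∑ i, nlog2 (a i / 2)) - 2 := by
    rw [Finset.sum_sub_distrib, ← Finset.mul_sum, hsum]
  rw [← hsum']
  exact Finset.sum_le_sum (fun i _ => hpt i)


end
end

section
/- Let ρ be a state ε-close in trace norm (0 < ε < 1) to α_m = U(P_m ⊗ σ)U† on system AA'B', where P_m is the projector onto the uniform-superposition state of an m-qubit register A and U is a controlled unitary with control A. Then the probability distribution obtained by untwisting with U†, tracing out A'B', and measuring A in the Fourier basis has relative entropy at least (1−ε)m − h(ε) from the uniform distribution on 2^m outcomes. -/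
open Matrix BigOperators Filter ComplexOrder

noncomputable section

def ctrlU {N : ℕ} {n' : Type*} (Ui : Fin N → Matrix n' n' ℂ) :
    Matrix (Fin N × n') (Fin N × n') ℂ :=
  fun p q => if p.1 = q.1 then Ui p.1 p.2 q.2 else 0

def pmTensor (N : ℕ) {n' : Type*} (σ : Matrix n' n' ℂ) :
    Matrix (Fin N × n') (Fin N × n') ℂ :=
  fun p q => (N : ℂ)⁻¹ * σ p.2 q.2

def fourierVec (N : ℕ) (k : Fin N) : Fin N → ℂ :=
  fun j => Complex.exp (2 * Real.pi * Complex.I * ((k : ℕ) : ℂ) * ((j : ℕ) : ℂ) / (N : ℂ))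
    / (Real.sqrt N : ℂ)

def redA {N : ℕ} {n' : Type*} [Fintype n']
    (X : Matrix (Fin N × n') (Fin N × n') ℂ) : Matrix (Fin N) (Fin N) ℂ :=
  fun i j => ∑ a, X (i, a) (j, a)

def probF {N : ℕ} {n' : Type*} [Fintype n']
    (X : Matrix (Fin N × n') (Fin N × n') ℂ) (k : Fin N) : ℝ :=
  (star (fourierVec N k) ⬝ᵥ (redA X).mulVec (fourierVec N k)).re

/-!
Untwisting by `U†` maps `α_m` to `P_m ⊗ σ`. The Fourier outcome `0` is `|+_m⟩`, so its
probability on the untwisted state `X` is `Re tr ((P_m ⊗ 1) X)` (with `P_m ⊗ 1 = pmTensor N 1`).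
Since `|Re tr (R (ρ - α_m))| ≤ ‖ρ - α_m‖₁` for every `0 ≤ R ≤ 1`, this probability is at least
`1 - ε`. A distribution on `2^m` points with an atom of mass `≥ 1 - ε` is at divergence
`≥ (1 - ε) m - h(ε)` from uniform: by Gibbs' inequality its divergence is at least its
cross-entropy against the distribution `q` putting `1 - ε` on the atom and `ε` evenly on the
other points, and this cross-entropy is explicit.
-/

section Entropy

open Real

theorem nlog2_nonneg {x : ℝ} (h0 : 0 ≤ x) (h1 : x ≤ 1) : 0 ≤ nlog2 x :=
  neg_nonneg.mpr (mul_nonpos_of_nonneg_of_nonpos h0 (logb_nonpos one_lt_two h0 h1))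

theorem sub_le_mul_log_div {p q : ℝ} (hp : 0 ≤ p) (hq : 0 < q) : p - q ≤ p * log (p / q) := by
  have h := mul_nonneg hq.le (InformationTheory.klFun_nonneg (div_nonneg hp hq.le))
  rw [InformationTheory.klFun_apply] at h
  field_simp at h
  linarith

theorem klDiv2_nonneg {ι : Type*} [Fintype ι] {p q : ι → ℝ} (hp : ∀ i, 0 ≤ p i)
    (hq : ∀ i, 0 < q i) (hpq : ∑ i, q i ≤ ∑ i, p i) : 0 ≤ klDiv2 p q := by
  have hlog : 0 ≤ ∑ i, p i * log (p i / q i) := by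
    have := Finset.sum_le_sum fun i (_ : i ∈ Finset.univ) => sub_le_mul_log_div (hp i) (hq i)
    rw [Finset.sum_sub_distrib] at this
    linarith
  have : klDiv2 p q = (∑ i, p i * log (p i / q i)) / log 2 := by
    simp only [klDiv2, logb, Finset.sum_div, mul_div_assoc]
  rw [this]
  exact div_nonneg hlog (log_nonneg one_le_two)

theorem one_sub_mul_logb_le_binEnt {ε N : ℝ} (hε : 0 < ε) (hε1 : ε < 1) (hN : 0 < N)
    (hεN : (1 - ε) * N ≤ 1) : (1 - ε) * logb 2 N ≤ binEnt ε := by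
  have h1ε : 0 < 1 - ε := by linarith
  have hlog : logb 2 N ≤ logb 2 (1 - ε)⁻¹ :=
    logb_le_logb_of_le one_lt_two hN (by rw [← one_div, le_div_iff₀ h1ε]; linarith)
  have : nlog2 (1 - ε) = (1 - ε) * logb 2 (1 - ε)⁻¹ := by
    rw [nlog2, logb_inv]; ring
  have := nlog2_nonneg hε.le hε1.le
  unfold binEnt
  nlinarith

theorem klDiv2_eq_klDiv2_add {ι : Type*} [Fintype ι] {p q r : ι → ℝ} (hp : ∀ i, 0 ≤ p i)
    (hq : ∀ i, 0 < q i) (hr : ∀ i, 0 < r i) :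
    klDiv2 p r = klDiv2 p q + ∑ i, p i * logb 2 (q i / r i) := by
  rw [klDiv2, klDiv2, ← Finset.sum_add_distrib]
  refine Finset.sum_congr rfl fun i _ => ?_
  rcases (hp i).eq_or_lt with h0 | h0
  · simp [← h0]
  · rw [← mul_add, ← logb_mul (div_pos h0 (hq i)).ne' (div_pos (hq i) (hr i)).ne']
    field_simp [(hq i).ne']

theorem klDiv2_uniform_ge_of_one_lt {ι : Type*} [Fintype ι] {p : ι → ℝ} {ε : ℝ} {i₀ : ι}
    (hε : 0 < ε) (hp : ∀ i, 0 ≤ p i) (hp1 : ∑ i, p i = 1) (hpi₀ : 1 - ε ≤ p i₀)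
    (hεN : 1 < (1 - ε) * Fintype.card ι) :
    (1 - ε) * logb 2 (Fintype.card ι) - binEnt ε ≤ klDiv2 p fun _ => (Fintype.card ι : ℝ)⁻¹ := by
  classical
  set N : ℝ := (Fintype.card ι : ℝ)
  have hN0 : 0 ≤ N := Nat.cast_nonneg _
  have hN1 : 0 < N - 1 := by nlinarith
  have h1ε : 0 < 1 - ε := by nlinarith
  set q : ι → ℝ := fun i => if i = i₀ then 1 - ε else ε / (N - 1)
  have hq : ∀ i, 0 < q i := fun i => by unfold q; split_ifs <;> positivity
  have hrest : ∑ i ∈ Finset.univ.erase i₀, p i = 1 - p i₀ := by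
    rw [← hp1, ← Finset.add_sum_erase _ _ (Finset.mem_univ i₀)]; ring
  have hcard : ((Finset.univ.erase i₀).card : ℝ) = N - 1 := by
    rw [Finset.card_erase_of_mem (Finset.mem_univ _), Finset.card_univ,
      Nat.cast_sub (Fintype.card_pos_iff.mpr ⟨i₀⟩), Nat.cast_one]
  have hq1 : ∑ i, q i = ∑ i, p i := by
    rw [hp1, ← Finset.add_sum_erase _ _ (Finset.mem_univ i₀),
      Finset.sum_congr rfl fun i hi => if_neg (Finset.ne_of_mem_erase hi), Finset.sum_const,
      nsmul_eq_mul, hcard]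
    simp only [q, if_pos]
    field_simp; ring
  set A := logb 2 ((1 - ε) * N)
  set B := logb 2 (ε / (N - 1) * N)
  have hcross : ∑ i, p i * logb 2 (q i / N⁻¹) = p i₀ * A + (1 - p i₀) * B := by
    rw [← Finset.add_sum_erase _ _ (Finset.mem_univ i₀), ← hrest, Finset.sum_mul]
    congr 1
    · simp [q, A]
    · exact Finset.sum_congr rfl fun i hi => by simp [q, B, Finset.ne_of_mem_erase hi]
  have hBA : B ≤ A := logb_le_logb_of_le one_lt_two (mul_pos (div_pos hε hN1) (by linarith))
    (mul_le_mul_of_nonneg_right (by rw [div_le_iff₀ hN1]; nlinarith) (by positivity))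
  have hAB : (1 - ε) * A + ε * B = logb 2 N - binEnt ε - ε * logb 2 (N - 1) := by
    simp only [A, B, binEnt, nlog2]
    rw [logb_mul h1ε.ne' (by linarith), logb_mul (div_pos hε hN1).ne' (by linarith),
      logb_div hε.ne' hN1.ne']
    ring
  have hlogN : logb 2 (N - 1) ≤ logb 2 N := logb_le_logb_of_le one_lt_two hN1 (by linarith)
  have hgibbs := klDiv2_nonneg hp hq hq1.le
  rw [klDiv2_eq_klDiv2_add hp hq fun _ => inv_pos.mpr (by linarith), hcross]
  nlinarith

theorem klDiv2_uniform_ge {ι : Type*} [Fintype ι] {p : ι → ℝ} {ε : ℝ} {i₀ : ι}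
    (hε : 0 < ε) (hε1 : ε < 1) (hp : ∀ i, 0 ≤ p i) (hp1 : ∑ i, p i = 1) (hpi₀ : 1 - ε ≤ p i₀) :
    (1 - ε) * logb 2 (Fintype.card ι) - binEnt ε ≤ klDiv2 p fun _ => (Fintype.card ι : ℝ)⁻¹ := by
  have hN : (0 : ℝ) < Fintype.card ι := Nat.cast_pos.mpr (Fintype.card_pos_iff.mpr ⟨i₀⟩)
  rcases le_or_gt ((1 - ε) * Fintype.card ι) 1 with hεN | hεN
  · have hD := klDiv2_nonneg hp (fun _ => inv_pos.mpr hN) (by simp [hp1, hN.ne'])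
    linarith [one_sub_mul_logb_le_binEnt hε hε1 hN hεN]
  · exact klDiv2_uniform_ge_of_one_lt hε hp hp1 hpi₀ hεN

end Entropy

open Complex Real in
theorem star_fourierVec_mul_fourierVec {N : ℕ} (k i j : Fin N) :
    star (fourierVec N k i) * fourierVec N k j =
      (exp (2 * π * I / N) ^ ((j : ℤ) - i)) ^ (k : ℕ) / N := by
  have hN : (N : ℂ) ≠ 0 := Nat.cast_ne_zero.mpr k.pos.ne'
  have hsqrt : ((√N : ℝ) : ℂ) * (√N : ℝ) = N := by
    rw [← ofReal_mul, Real.mul_self_sqrt (Nat.cast_nonneg N), ofReal_natCast]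
  rw [← exp_int_mul, ← Complex.exp_nat_mul, fourierVec, fourierVec, star_div₀, Complex.star_def,
    ← exp_conj, div_mul_div_comm, ← Complex.exp_add, Complex.conj_ofReal, hsqrt]
  congr 2
  simp only [map_div₀, map_mul, conj_ofReal, conj_I, map_natCast, map_ofNat]
  push_cast
  ring

open Complex Real in
theorem fourierVec_orthonormal {N : ℕ} (i j : Fin N) :
    ∑ k, star (fourierVec N k i) * fourierVec N k j = if i = j then 1 else 0 := by
  have hN : N ≠ 0 := i.pos.ne'
  have hζ := isPrimitiveRoot_exp N hN
  simp_rw [star_fourierVec_mul_fourierVec, ← Finset.sum_div]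
  rw [Fin.sum_univ_eq_sum_range (fun k => (exp (2 * π * I / N) ^ ((j : ℤ) - i)) ^ k)]
  split_ifs with hij
  · simp [hij, hN]
  · have hw : exp (2 * π * I / N) ^ ((j : ℤ) - i) ≠ 1 := by
      rw [Ne, hζ.zpow_eq_one_iff_dvd]
      intro hdvd
      have := Int.eq_zero_of_abs_lt_dvd hdvd (by rw [abs_lt]; omega)
      omega
    have hwN : (exp (2 * π * I / N) ^ ((j : ℤ) - i)) ^ N = 1 := by
      rw [← zpow_natCast, ← _root_.zpow_mul, mul_comm ((j : ℤ) - i), _root_.zpow_mul,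
        zpow_natCast, hζ.pow_eq_one, _root_.one_zpow]
    rw [geom_sum_eq hw, hwN, sub_self, zero_div, zero_div]

theorem sum_dotProduct_fourierVec {N : ℕ} (M : Matrix (Fin N) (Fin N) ℂ) :
    ∑ k, star (fourierVec N k) ⬝ᵥ M *ᵥ fourierVec N k = M.trace := by
  have hk : ∀ k, star (fourierVec N k) ⬝ᵥ M *ᵥ fourierVec N k =
      ∑ i, ∑ j, star (fourierVec N k i) * fourierVec N k j * M i j := fun k => by
    simp only [dotProduct, mulVec, Finset.mul_sum, Pi.star_apply]
    exact Finset.sum_congr rfl fun i _ => Finset.sum_congr rfl fun j _ => by ring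
  simp_rw [hk]
  rw [Finset.sum_comm, Finset.sum_congr rfl fun i _ => Finset.sum_comm]
  simp_rw [← Finset.sum_mul, fourierVec_orthonormal]
  simp [Matrix.trace]

theorem trace_redA {N : ℕ} {n' : Type*} [Fintype n'] (X : Matrix (Fin N × n') (Fin N × n') ℂ) :
    (redA X).trace = X.trace := by
  simp [Matrix.trace, redA, Fintype.sum_prod_type]

theorem sum_probF {N : ℕ} {n' : Type*} [Fintype n'] (X : Matrix (Fin N × n') (Fin N × n') ℂ) :
    ∑ k, probF X k = X.trace.re := by
  simp only [probF, ← Complex.re_sum, sum_dotProduct_fourierVec, trace_redA]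

theorem Matrix.PosSemidef.redA {N : ℕ} {n' : Type*} [Fintype n']
    {X : Matrix (Fin N × n') (Fin N × n') ℂ} (hX : X.PosSemidef) : (_root_.redA X).PosSemidef := by
  have : _root_.redA X = ∑ a, X.submatrix (fun i => (i, a)) (fun i => (i, a)) := by
    ext i j; simp [_root_.redA, Matrix.sum_apply]
  rw [this]
  exact Matrix.posSemidef_sum _ fun a _ => hX.submatrix _

theorem probF_nonneg {N : ℕ} {n' : Type*} [Fintype n']
    {X : Matrix (Fin N × n') (Fin N × n') ℂ} (hX : X.PosSemidef) (k : Fin N) : 0 ≤ probF X k :=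
  (Complex.nonneg_iff.mp (hX.redA.dotProduct_mulVec_nonneg _)).1

theorem fourierVec_zero {N : ℕ} (hN : 0 < N) :
    fourierVec N ⟨0, hN⟩ = fun _ => ((√N : ℝ) : ℂ)⁻¹ := by
  ext j; simp [fourierVec]

theorem dotProduct_fourierVec_zero {N : ℕ} (hN : 0 < N) (M : Matrix (Fin N) (Fin N) ℂ) :
    star (fourierVec N ⟨0, hN⟩) ⬝ᵥ M *ᵥ fourierVec N ⟨0, hN⟩ = (N : ℂ)⁻¹ * ∑ i, ∑ j, M i j := by
  have hsqrt : ((√N : ℝ) : ℂ) * (√N : ℝ) = N := by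
    rw [← Complex.ofReal_mul, Real.mul_self_sqrt (Nat.cast_nonneg N), Complex.ofReal_natCast]
  simp only [fourierVec_zero, dotProduct, mulVec, Finset.mul_sum, Pi.star_apply, star_inv₀,
    Complex.star_def, Complex.conj_ofReal, ← hsqrt, mul_inv]
  exact Finset.sum_congr rfl fun i _ => Finset.sum_congr rfl fun j _ => by ring

theorem trace_pmTensor_one_mul {N : ℕ} {n' : Type*} [Fintype n'] [DecidableEq n']
    (Y : Matrix (Fin N × n') (Fin N × n') ℂ) :
    (pmTensor N (1 : Matrix n' n' ℂ) * Y).trace = (N : ℂ)⁻¹ * ∑ i, ∑ j, redA Y i j := by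
  simp only [trace, diag_apply, Matrix.mul_apply, pmTensor, Matrix.one_apply, mul_ite, mul_one,
    mul_zero, ite_mul, zero_mul, Fintype.sum_prod_type, Finset.sum_ite_eq, Finset.mem_univ,
    if_true, redA, Finset.mul_sum]
  conv_rhs => rw [Finset.sum_comm]
  exact Finset.sum_congr rfl fun i _ => Finset.sum_comm

theorem probF_zero {N : ℕ} {n' : Type*} [Fintype n'] [DecidableEq n'] (hN : 0 < N)
    (Y : Matrix (Fin N × n') (Fin N × n') ℂ) :
    probF Y ⟨0, hN⟩ = (pmTensor N (1 : Matrix n' n' ℂ) * Y).trace.re := by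
  rw [probF, dotProduct_fourierVec_zero, trace_pmTensor_one_mul]

theorem pmTensor_mul_pmTensor {N : ℕ} {n' : Type*} [Fintype n'] (hN : N ≠ 0)
    (A B : Matrix n' n' ℂ) : pmTensor N A * pmTensor N B = pmTensor N (A * B) := by
  ext p q
  simp only [Matrix.mul_apply, pmTensor, Fintype.sum_prod_type, Finset.sum_const, Finset.card_univ,
    Fintype.card_fin, nsmul_eq_mul, Finset.mul_sum]
  exact Finset.sum_congr rfl fun i _ => by field_simp

theorem trace_pmTensor {N : ℕ} {n' : Type*} [Fintype n'] (hN : N ≠ 0) (A : Matrix n' n' ℂ) :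
    (pmTensor N A).trace = A.trace := by
  simp [Matrix.trace, pmTensor, Fintype.sum_prod_type, ← Finset.mul_sum, hN]

theorem conjTranspose_pmTensor {N : ℕ} {n' : Type*} (A : Matrix n' n' ℂ) :
    (pmTensor N A)ᴴ = pmTensor N Aᴴ := by
  ext p q
  simp [pmTensor, mul_comm]

theorem Matrix.IsHermitian.pmTensor {N : ℕ} {n' : Type*} {A : Matrix n' n' ℂ}
    (hA : A.IsHermitian) : (pmTensor N A).IsHermitian := by
  rw [IsHermitian, conjTranspose_pmTensor, hA.eq]

theorem isStarProjection_pmTensor_one {N : ℕ} {n' : Type*} [Fintype n'] [DecidableEq n']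
    (hN : N ≠ 0) : IsStarProjection (pmTensor N (1 : Matrix n' n' ℂ)) where
  isIdempotentElem := by rw [IsIdempotentElem, pmTensor_mul_pmTensor hN, mul_one]
  isSelfAdjoint := isHermitian_one.pmTensor

theorem ctrlU_eq_submatrix_blockDiagonal {N : ℕ} {n' : Type*}
    (Ui : Fin N → Matrix n' n' ℂ) :
    ctrlU Ui = (blockDiagonal Ui).submatrix (Equiv.prodComm _ _) (Equiv.prodComm _ _) := by
  ext ⟨i, a⟩ ⟨j, b⟩
  simp [ctrlU, blockDiagonal_apply]

theorem ctrlU_mem_unitaryGroup {N : ℕ} {n' : Type*} [Fintype n'] [DecidableEq n']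
    {Ui : Fin N → Matrix n' n' ℂ} (hUi : ∀ i, Ui i ∈ unitaryGroup n' ℂ) :
    ctrlU Ui ∈ unitaryGroup (Fin N × n') ℂ := by
  rw [mem_unitaryGroup_iff', ctrlU_eq_submatrix_blockDiagonal, star_eq_conjTranspose,
    conjTranspose_submatrix, submatrix_mul_equiv, blockDiagonal_conjTranspose, ← blockDiagonal_mul]
  simp_rw [← star_eq_conjTranspose, (mem_unitaryGroup_iff' ..).mp (hUi _)]
  rw [← Pi.one_def, blockDiagonal_one, submatrix_one_equiv]

open scoped MatrixOrder in
theorem abs_re_trace_mul_le_traceNorm {n : Type*} [Fintype n] [DecidableEq n]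
    {R Δ : Matrix n n ℂ} (hR0 : 0 ≤ R) (hR1 : R ≤ 1) (hΔ : Δ.IsHermitian) :
    |(R * Δ).trace.re| ≤ traceNorm Δ := by
  set V := hΔ.eigenvectorUnitary
  set S := star (V : Matrix n n ℂ) * R * V
  have hS0 : S.PosSemidef := (star_left_conjugate_nonneg hR0 _).posSemidef
  have hS1 : (1 - S).PosSemidef := by
    have := star_left_conjugate_le_conjugate hR1 (V : Matrix n n ℂ)
    rwa [mul_one, Unitary.coe_star_mul_self] at this
  have hdiag : ∀ i, |(S i i).re| ≤ 1 := fun i => by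
    have h0 := Complex.nonneg_iff.mp (hS0.diag_nonneg (i := i))
    have h1 := Complex.nonneg_iff.mp (hS1.diag_nonneg (i := i))
    simp only [Matrix.sub_apply, one_apply_eq, Complex.sub_re, Complex.one_re] at h1
    rw [abs_le]; constructor <;> linarith [h0.1, h1.1]
  have htrace : (R * Δ).trace = ∑ i, S i i * hΔ.eigenvalues i := by
    conv_lhs => rw [hΔ.spectral_theorem, Unitary.conjStarAlgAut_apply, ← mul_assoc, ← mul_assoc,
      trace_mul_cycle, ← mul_assoc]
    simp [Matrix.trace, mul_diagonal, S, V]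
  rw [traceNorm, dif_pos hΔ, htrace, Complex.re_sum]
  refine (Finset.abs_sum_le_sum_abs _ _).trans (Finset.sum_le_sum fun i _ => ?_)
  rw [Complex.re_mul_ofReal, abs_mul]
  exact mul_le_of_le_one_left (abs_nonneg _) (hdiag i)

open scoped MatrixOrder in
theorem re_trace_sub_traceNorm_le_re_trace_conj {n : Type*} [Fintype n] [DecidableEq n]
    {U P τ ρ : Matrix n n ℂ} (hU : U ∈ unitaryGroup n ℂ) (hP : IsStarProjection P)
    (hτ : τ.IsHermitian) (hρ : ρ.IsHermitian) :
    (P * τ).trace.re - traceNorm (ρ - U * τ * Uᴴ) ≤ (P * (Uᴴ * ρ * U)).trace.re := by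
  have hUU : Uᴴ * U = 1 := (mem_unitaryGroup_iff' ..).mp hU
  have hR0 : 0 ≤ U * P * Uᴴ := star_right_conjugate_nonneg hP.nonneg U
  have hR1 : U * P * Uᴴ ≤ 1 := by
    have := star_right_conjugate_le_conjugate hP.le_one U
    rwa [mul_one, (mem_unitaryGroup_iff ..).mp hU] at this
  have hΔ := hρ.sub (isHermitian_mul_mul_conjTranspose U hτ)
  have hconj : (P * (Uᴴ * ρ * U)).trace = (U * P * Uᴴ * ρ).trace := by
    rw [← mul_assoc, trace_mul_comm, ← mul_assoc, ← mul_assoc]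
  have hsignal : (U * P * Uᴴ * (U * τ * Uᴴ)).trace = (P * τ).trace := by
    rw [show U * P * Uᴴ * (U * τ * Uᴴ) = U * (P * τ) * Uᴴ by
      simp only [mul_assoc, ← mul_assoc Uᴴ U, hUU, one_mul], trace_mul_cycle, hUU, one_mul]
  have hnoise := abs_le.mp (abs_re_trace_mul_le_traceNorm hR0 hR1 hΔ)
  have hsplit : (U * P * Uᴴ * ρ).trace =
      (U * P * Uᴴ * (ρ - U * τ * Uᴴ)).trace + (P * τ).trace := by
    rw [← hsignal, ← trace_add, ← mul_add, sub_add_cancel]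
  rw [hconj, hsplit, Complex.add_re]
  linarith [hnoise.1]

theorem untwisted_fourier_measurement_relent_bound
    (m : ℕ) (n' : Type*) [Fintype n'] [DecidableEq n']
    (ε : ℝ) (hε : 0 < ε) (hε1 : ε < 1)
    (Ui : Fin (2^m) → Matrix n' n' ℂ)
    (hUi : ∀ i, Ui i ∈ Matrix.unitaryGroup n' ℂ)
    (σ : Matrix n' n' ℂ) (hσ : σ.PosSemidef) (hσ1 : σ.trace = 1)
    (ρ : Matrix (Fin (2^m) × n') (Fin (2^m) × n') ℂ)
    (hρ : ρ.PosSemidef) (hρ1 : ρ.trace = 1)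
    (hclose : traceNorm (ρ - ctrlU Ui * pmTensor (2^m) σ * (ctrlU Ui)ᴴ) ≤ ε) :
    (1 - ε) * m - binEnt ε ≤
      ∑ k : Fin (2^m),
        probF ((ctrlU Ui)ᴴ * ρ * ctrlU Ui) k *
          Real.logb 2 (probF ((ctrlU Ui)ᴴ * ρ * ctrlU Ui) k * 2^m) := by
  have hN : 0 < 2 ^ m := Nat.two_pow_pos m
  have hU := ctrlU_mem_unitaryGroup hUi
  set X := (ctrlU Ui)ᴴ * ρ * ctrlU Ui
  have hX1 : X.trace = 1 := by
    rw [trace_mul_cycle, ← star_eq_conjTranspose, (mem_unitaryGroup_iff ..).mp hU, one_mul, hρ1]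
  have hpeak : 1 - ε ≤ probF X ⟨0, hN⟩ := by
    have := re_trace_sub_traceNorm_le_re_trace_conj hU (isStarProjection_pmTensor_one hN.ne')
      hσ.isHermitian.pmTensor hρ.isHermitian
    rw [pmTensor_mul_pmTensor hN.ne', one_mul, trace_pmTensor hN.ne', hσ1, Complex.one_re] at this
    rw [probF_zero hN]
    linarith [hclose]
  have := klDiv2_uniform_ge hε hε1 (probF_nonneg (hρ.conjTranspose_mul_mul_same _))
    (by rw [sum_probF, hX1, Complex.one_re]) hpeak
  simpa [klDiv2, Real.logb_pow] using this

end
end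

section
/- Any private state is an independent state: for γ = U(|ψ⁺⟩⟨ψ⁺|_{AB} ⊗ σ_{A'B'})U† with twisting U = Σᵢ|ii⟩⟨ii|⊗Uᵢ, there exists a controlled unitary W = Σᵢ|i⟩⟨i|_A ⊗ Wᵢ (control on A alone, target BA'B') such that γ = W(|+⟩⟨+|_A ⊗ |0⟩⟨0|_B ⊗ σ_{A'B'})W†. -/
open Matrix BigOperators Filter ComplexOrder

noncomputable section

def twistU {d : ℕ} {n' : Type*} (Ui : Fin d → Matrix n' n' ℂ) :
    Matrix (Fin d × (Fin d × n')) (Fin d × (Fin d × n')) ℂ :=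
  fun p q => if p.1 = p.2.1 ∧ q.1 = q.2.1 ∧ p.1 = q.1 then Ui p.1 p.2.2 q.2.2 else 0

def ctrlW {d : ℕ} {n' : Type*} (W : Fin d → Matrix (Fin d × n') (Fin d × n') ℂ) :
    Matrix (Fin d × (Fin d × n')) (Fin d × (Fin d × n')) ℂ :=
  fun p q => if p.1 = q.1 then W p.1 p.2 q.2 else 0

def psiProjTensor (d : ℕ) {n' : Type*} (σ : Matrix n' n' ℂ) :
    Matrix (Fin d × (Fin d × n')) (Fin d × (Fin d × n')) ℂ :=
  fun p q => if p.1 = p.2.1 ∧ q.1 = q.2.1 then (d : ℂ)⁻¹ * σ p.2.2 q.2.2 else 0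

def plusZeroTensor {d : ℕ} (hd : 0 < d) {n' : Type*} (σ : Matrix n' n' ℂ) :
    Matrix (Fin d × (Fin d × n')) (Fin d × (Fin d × n')) ℂ :=
  fun p q =>
    if p.2.1 = (⟨0, hd⟩ : Fin d) ∧ q.2.1 = (⟨0, hd⟩ : Fin d) then
      (d : ℂ)⁻¹ * σ p.2.2 q.2.2
    else 0


/-! Since |ψ⁺⟩ is supported on the diagonal |ii⟩, the twist `Σᵢ |ii⟩⟨ii| ⊗ Uᵢ` acts on
|ψ⁺⟩⟨ψ⁺| ⊗ σ exactly as the twist `Σᵢ |i⟩⟨i|_A ⊗ I_B ⊗ Uᵢ` controlled by A alone. Moreover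
|ψ⁺⟩ = τ (|+⟩ ⊗ |0⟩) for the controlled cyclic shift `τ = Σᵢ |i⟩⟨i|_A ⊗ Sᵢ`, `Sᵢ |j⟩ = |j + i⟩`.
Composing the two controlled unitaries gives `Wᵢ = Sᵢ ⊗ Uᵢ`. -/

open scoped Kronecker

theorem Matrix.permMatrix_mem_unitaryGroup {n α : Type*} [Fintype n] [DecidableEq n]
    [CommRing α] [StarRing α] (π : Equiv.Perm n) :
    π.permMatrix α ∈ Matrix.unitaryGroup n α := by
  rw [mem_unitaryGroup_iff, star_eq_conjTranspose, conjTranspose_permMatrix, ← permMatrix_mul,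
    inv_mul_cancel, permMatrix_one]

def shiftMatrix {d : ℕ} [NeZero d] (i : Fin d) : Matrix (Fin d) (Fin d) ℂ :=
  Equiv.Perm.permMatrix ℂ (Equiv.subRight i)

theorem shiftMatrix_apply {d : ℕ} [NeZero d] (i a b : Fin d) :
    shiftMatrix i a b = if a = b + i then 1 else 0 := by
  simp [shiftMatrix, PEquiv.toMatrix_apply, sub_eq_iff_eq_add]

section ControlledUnitaries

variable {d : ℕ} {n' : Type*}

theorem conjTranspose_ctrlW (W : Fin d → Matrix (Fin d × n') (Fin d × n') ℂ) :
    (ctrlW W)ᴴ = ctrlW (fun i => (W i)ᴴ) := by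
  ext p q
  simp only [ctrlW, conjTranspose_apply, eq_comm (a := q.1)]
  split_ifs with h
  · rw [h]
  · exact star_zero _

variable [Fintype n']

theorem ctrlW_mul_ctrlW (W V : Fin d → Matrix (Fin d × n') (Fin d × n') ℂ) :
    ctrlW W * ctrlW V = ctrlW (W * V) := by
  ext p q
  rw [mul_apply, Fintype.sum_prod_type]
  simp only [ctrlW, ite_mul, zero_mul, mul_ite, mul_zero, Finset.sum_ite_irrel,
    Finset.sum_const_zero, Finset.sum_ite_eq', Finset.mem_univ, if_true]
  split_ifs <;> simp_all [mul_apply]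

theorem twistU_mul_eq_ctrlW_mul {m : Type*} (U : Fin d → Matrix n' n' ℂ)
    (X : Matrix (Fin d × (Fin d × n')) m ℂ) (hX : ∀ p q, p.1 ≠ p.2.1 → X p q = 0) :
    twistU U * X = ctrlW (fun i => (1 : Matrix (Fin d) (Fin d) ℂ) ⊗ₖ U i) * X := by
  ext p q
  refine Finset.sum_congr rfl fun r _ => ?_
  by_cases hr : r.1 = r.2.1
  · simp only [twistU, ctrlW, kroneckerMap_apply, one_apply]
    split_ifs <;> simp_all
  · simp [hX r q hr]

theorem twistU_conj_eq_ctrlW_conj (U : Fin d → Matrix n' n' ℂ)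
    (X : Matrix (Fin d × (Fin d × n')) (Fin d × (Fin d × n')) ℂ)
    (hrow : ∀ p q, p.1 ≠ p.2.1 → X p q = 0) (hcol : ∀ p q, q.1 ≠ q.2.1 → X p q = 0) :
    twistU U * X * (twistU U)ᴴ =
      ctrlW (fun i => (1 : Matrix (Fin d) (Fin d) ℂ) ⊗ₖ U i) * X *
        (ctrlW (fun i => (1 : Matrix (Fin d) (Fin d) ℂ) ⊗ₖ U i))ᴴ := by
  have hright :
      X * (twistU U)ᴴ = X * (ctrlW (fun i => (1 : Matrix (Fin d) (Fin d) ℂ) ⊗ₖ U i))ᴴ := by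
    simpa only [conjTranspose_mul, conjTranspose_conjTranspose] using
      congrArg conjTranspose (twistU_mul_eq_ctrlW_mul U Xᴴ fun p q hp => by simp [hcol q p hp])
  rw [twistU_mul_eq_ctrlW_mul U X hrow, mul_assoc, hright, ← mul_assoc]

variable [DecidableEq n']

theorem ctrlW_shift_conj_plusZeroTensor [NeZero d] (hd : 0 < d) (σ : Matrix n' n' ℂ) :
    ctrlW (fun i => shiftMatrix i ⊗ₖ (1 : Matrix n' n' ℂ)) * plusZeroTensor hd σ *
      (ctrlW (fun i => shiftMatrix i ⊗ₖ (1 : Matrix n' n' ℂ)))ᴴ = psiProjTensor d σ := by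
  rw [conjTranspose_ctrlW]
  ext p q
  simp only [mul_apply, Fintype.sum_prod_type, ctrlW, plusZeroTensor, psiProjTensor,
    conjTranspose_apply, kroneckerMap_apply, shiftMatrix_apply, one_apply]
  simp only [ite_mul, mul_ite, zero_mul, mul_zero, mul_one, ite_and, star_zero,
    apply_ite (star : ℂ → ℂ), Finset.sum_ite_irrel, Finset.sum_const_zero, Finset.sum_ite_eq,
    Finset.sum_ite_eq', Finset.mem_univ, if_true]
  rw [show (⟨0, hd⟩ : Fin d) = 0 from rfl,
    Finset.sum_eq_single 0 (fun x _ hx => by simp [hx]) (by simp)]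
  split_ifs <;> simp_all [eq_comm]

end ControlledUnitaries

theorem private_state_is_independent_state_general (d : ℕ) (hd : 0 < d)
    (n' : Type*) [Fintype n'] [DecidableEq n']
    (Ui : Fin d → Matrix n' n' ℂ)
    (hUi : ∀ i, Ui i ∈ Matrix.unitaryGroup n' ℂ)
    (σ : Matrix n' n' ℂ) :
    ∃ W : Fin d → Matrix (Fin d × n') (Fin d × n') ℂ,
      (∀ i, W i ∈ Matrix.unitaryGroup (Fin d × n') ℂ) ∧
      twistU Ui * psiProjTensor d σ * (twistU Ui)ᴴ =
        ctrlW W * plusZeroTensor hd σ * (ctrlW W)ᴴ := by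
  have : NeZero d := ⟨hd.ne'⟩
  refine ⟨fun i => shiftMatrix i ⊗ₖ Ui i,
    fun i => kronecker_mem_unitary (permMatrix_mem_unitaryGroup _) (hUi i), ?_⟩
  have hfactor : ctrlW (fun i => shiftMatrix i ⊗ₖ Ui i) =
      ctrlW (fun i => 1 ⊗ₖ Ui i) * ctrlW (fun i => shiftMatrix i ⊗ₖ (1 : Matrix n' n' ℂ)) := by
    rw [ctrlW_mul_ctrlW]
    congr 1
    funext i
    rw [Pi.mul_apply, ← mul_kronecker_mul, one_mul, mul_one]
  rw [twistU_conj_eq_ctrlW_conj Ui (psiProjTensor d σ) (fun p q hp => if_neg fun h => hp h.1)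
      (fun p q hq => if_neg fun h => hq h.2),
    ← ctrlW_shift_conj_plusZeroTensor hd σ, hfactor, conjTranspose_mul]
  simp only [mul_assoc]

theorem private_state_is_independent_state (d : ℕ) (hd : 0 < d)
    (n' : Type*) [Fintype n'] [DecidableEq n']
    (Ui : Fin d → Matrix n' n' ℂ)
    (hUi : ∀ i, Ui i ∈ Matrix.unitaryGroup n' ℂ)
    (σ : Matrix n' n' ℂ) (hσ : σ.PosSemidef) (hσ1 : σ.trace = 1) :
    ∃ W : Fin d → Matrix (Fin d × n') (Fin d × n') ℂ,
      (∀ i, W i ∈ Matrix.unitaryGroup (Fin d × n') ℂ) ∧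
      twistU Ui * psiProjTensor d σ * (twistU Ui)ᴴ =
        ctrlW W * plusZeroTensor hd σ * (ctrlW W)ᴴ :=
  private_state_is_independent_state_general d hd n' Ui hUi σ

end
end
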